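/- arXiv:2103.14688 — 2 statements merged into one kernel-verified Lean document; each statement's English description precedes it below -/
import Mathlib

section
/- Incremental transitive closure update correctness: let C be the transitive closure matrix of a directed graph G, and insert a new edge (i, j). Then the transitive closure of the new graph is C', where C'[u,v] = C[u,v] ∨ (C[u,i] ∧ C[j,v]) for all vertices u, v (with C[x,x] = 1 for all x). -/
/-!
A path that uses the new edge `(i, j)` reaches `i` within `E` before its first use of the edge
and continues from `j` within `E` after its last use.
-/

namespace Relation

variable {α : Type*} {r : α → α → Prop} {i j a b : α}

theorem ReflTransGen.of_or_edge (h : ReflTransGen (fun x y => r x y ∨ (x = i ∧ y = j)) a b) :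
    ReflTransGen r a b ∨ (ReflTransGen r a i ∧ ReflTransGen r j b) := by
  induction h with
  | refl => exact .inl .refl
  | tail _ hstep ih =>
    rcases hstep with hr | ⟨rfl, rfl⟩
    · exact ih.imp (·.tail hr) (And.imp_right (·.tail hr))
    · exact .inr ⟨ih.elim id (·.1), .refl⟩

theorem ReflTransGen.or_edge_of
    (h : ReflTransGen r a b ∨ (ReflTransGen r a i ∧ ReflTransGen r j b)) :
    ReflTransGen (fun x y => r x y ∨ (x = i ∧ y = j)) a b := by
  have lift {x y : α} :
      ReflTransGen r x y → ReflTransGen (fun x y => r x y ∨ (x = i ∧ y = j)) x y :=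
    ReflTransGen.mono (fun _ _ => Or.inl) x y
  rcases h with h | ⟨hai, hjb⟩
  · exact lift h
  · exact ((lift hai).tail (.inr ⟨rfl, rfl⟩)).trans (lift hjb)

end Relation

/-- Incremental transitive closure update correctness: after inserting edge `(i,j)`,
`v` is reachable from `u` iff it was already reachable, or `i` was reachable from `u`
and `v` reachable from `j`: `C'[u,v] = C[u,v] ∨ (C[u,i] ∧ C[j,v])`. -/
theorem insert_edge_closure {V : Type} (E : V → V → Prop) (i j : V) (u v : V) :
    Relation.ReflTransGen (fun a b => E a b ∨ (a = i ∧ b = j)) u v ↔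
      (Relation.ReflTransGen E u v ∨
        (Relation.ReflTransGen E u i ∧ Relation.ReflTransGen E j v)) :=
  ⟨Relation.ReflTransGen.of_or_edge, Relation.ReflTransGen.or_edge_of⟩
end

section
/- Soundness direction of the Kronecker-product CFPQ invariant: at any stage of the algorithm, if the accumulated product graph (of an RSM R and graph G) contains a path from a state-vertex pair (q_N⁰, u) to (q_N^f, v), where q_N⁰ is the initial state and q_N^f a final state of the box for nonterminal N, and every nonterminal-labeled edge used along the way corresponds to a previously established derivation, then there is a path π from u to v in G with N ⇒* ω(π) in the grammar. -/
/-- A path in an edge-labeled directed graph, together with its word of labels. -/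
inductive LPath {V L : Type} (E : V → L → V → Prop) : V → List L → V → Prop
  | nil (v : V) : LPath E v [] v
  | cons {u v w : V} {l : L} {ls : List L} :
      E u l v → LPath E v ls w → LPath E u (l :: ls) w

/-- `Flat D α w`: the terminal word `w` is obtained from the word `α` over `Σ ∪ N` by
replacing each nonterminal `A` with some word derivable from it (w.r.t. `D`). -/
inductive Flat {T Nt : Type} (D : Nt → List T → Prop) : List (T ⊕ Nt) → List T → Prop
  | nil : Flat D [] []
  | cons_t {t α w} : Flat D α w → Flat D (Sum.inl t :: α) (t :: w)
  | cons_n {A α w₁ w} : D A w₁ → Flat D α w → Flat D (Sum.inr A :: α) (w₁ ++ w)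

/-- Edge relation of the Kronecker product of an RSM transition graph and a graph. -/
def prodE {Q V L : Type} (δ : Q → L → Q → Prop) (E : V → L → V → Prop) :
    Q × V → L → Q × V → Prop :=
  fun p l q => δ p.1 l q.1 ∧ E p.2 l q.2

theorem LPath.append {V L : Type} {E : V → L → V → Prop} {u v w : V} {l1 l2 : List L}
    (h1 : LPath E u l1 v) (h2 : LPath E v l2 w) : LPath E u (l1 ++ l2) w := by
  induction h1 with
  | nil => exact h2
  | cons e _ ih => exact LPath.cons e (ih h2)

theorem prod_path_split {Q V T Nt : Type}
    (δ : Q → (T ⊕ Nt) → Q → Prop)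
    (Der : Nt → List T → Prop)
    (E₀ : V → T → V → Prop) (E : V → (T ⊕ Nt) → V → Prop)
    (hterm : ∀ u t v, E u (Sum.inl t) v → E₀ u t v)
    (hinv : ∀ u A v, E u (Sum.inr A) v → ∃ w, LPath E₀ u w v ∧ Der A w)
    {s t : Q × V} {α : List (T ⊕ Nt)}
    (h : LPath (prodE δ E) s α t) :
    LPath δ s.1 α t.1 ∧ ∃ w, LPath E₀ s.2 w t.2 ∧ Flat Der α w := by
  induction h with
  | nil v => exact ⟨LPath.nil _, [], LPath.nil _, Flat.nil⟩
  | cons e _ ih =>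
    obtain ⟨hδ, w, hw, hflat⟩ := ih
    refine ⟨LPath.cons e.1 hδ, ?_⟩
    rcases e with ⟨hd, hE⟩
    rename_i l ls ha
    cases l with
    | inl t => exact ⟨t :: w, LPath.cons (hterm _ _ _ hE) hw, Flat.cons_t hflat⟩
    | inr A =>
        obtain ⟨w1, hw1, hder⟩ := hinv _ _ _ hE
        exact ⟨w1 ++ w, hw1.append hw, Flat.cons_n hder hflat⟩

/-- Soundness direction of the Kronecker-product CFPQ invariant: if the product of the
RSM and the current graph contains a path from `(q_A⁰, u)` to `(q_A^f, v)`, terminal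
edges of the current graph come from the original graph, and every nonterminal edge
corresponds to a previously established derivation, then there is a path `π` from `u`
to `v` in the original graph with `A ⇒* ω(π)`. -/
theorem kron_cfpq_sound {Q V T Nt : Type}
    (δ : Q → (T ⊕ Nt) → Q → Prop) (q0 : Nt → Q) (fin : Nt → Q → Prop)
    (Der : Nt → List T → Prop)
    (E₀ : V → T → V → Prop) (E : V → (T ⊕ Nt) → V → Prop)
    (hclose : ∀ (A : Nt) (α : List (T ⊕ Nt)) (qf : Q) (w : List T),
      fin A qf → LPath δ (q0 A) α qf → Flat Der α w → Der A w)
    (hterm : ∀ u t v, E u (Sum.inl t) v → E₀ u t v)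
    (hinv : ∀ u A v, E u (Sum.inr A) v → ∃ w, LPath E₀ u w v ∧ Der A w) :
    ∀ (A : Nt) (u v : V) (α : List (T ⊕ Nt)) (qf : Q),
      fin A qf → LPath (prodE δ E) (q0 A, u) α (qf, v) →
      ∃ w, LPath E₀ u w v ∧ Der A w := by
  intro A u v α qf hfin hp
  obtain ⟨hδ, w, hw, hflat⟩ := prod_path_split δ Der E₀ E hterm hinv hp
  exact ⟨w, hw, hclose A α qf w hfin hδ hflat⟩
end
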